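/- arXiv:1504.01941 — 7 statements merged into one kernel-verified Lean document; each statement's English description precedes it below -/
import Mathlib

section
/- For every g ∈ S_n and all indices a, b ∈ Fin n, the matrix identity P(g)·Q_{a,b} = Q_{g(a),g(b)}·P(g) holds. (This is the matrix form of the defining relation g·X_{a,b} = X_{g(a),g(b)}·g of the twisted group algebra A(S_n), and shows that the map ρ(p·g) = ρ₁(p)·ρ₂(g) is a representation of A(S_n).) -/
/-- The square complex matrices indexed by the symmetric group `Equiv.Perm (Fin n)`. -/
abbrev PermMatrix (n : ℕ) := Matrix (Equiv.Perm (Fin n)) (Equiv.Perm (Fin n)) ℂ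

/-- The permutation matrix `P(g)` of the right regular representation:
`P(g) σ τ = 1` if `σ = τ ∘ g⁻¹` and `0` otherwise. -/
def permMat (n : ℕ) (g : Equiv.Perm (Fin n)) : PermMatrix n :=
  fun σ τ => if σ = τ * g⁻¹ then 1 else 0

/-- The diagonal matrix `Q_{a,b}` whose diagonal entry at `τ` is `q (τ a) (τ b)`. -/
def Qmat (n : ℕ) (q : Fin n → Fin n → ℂ) (a b : Fin n) : PermMatrix n :=
  Matrix.diagonal fun τ => q (τ a) (τ b)

theorem permMat_mul_diagonal {n : ℕ} (g : Equiv.Perm (Fin n)) (d : Equiv.Perm (Fin n) → ℂ) :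
    permMat n g * Matrix.diagonal d = Matrix.diagonal (fun σ => d (σ * g)) * permMat n g := by
  ext σ τ
  rw [Matrix.mul_diagonal, Matrix.diagonal_mul, permMat]
  split_ifs with h
  · rw [h, inv_mul_cancel_right, one_mul, mul_one]
  · simp only [zero_mul, mul_zero]

theorem permMat_mul_Qmat_general (n : ℕ) (q : Fin n → Fin n → ℂ)
    (g : Equiv.Perm (Fin n)) (a b : Fin n) :
    permMat n g * Qmat n q a b = Qmat n q (g a) (g b) * permMat n g :=
  -- `(σ * g) a` unfolds to `σ (g a)`, so the shifted diagonal is `Qmat n q (g a) (g b)`.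
  permMat_mul_diagonal g _

/-- The matrix form `P(g) · Q_{a,b} = Q_{g(a),g(b)} · P(g)` of the defining relation
`g · X_{a,b} = X_{g(a),g(b)} · g` of the twisted group algebra `A(S_n)`. -/
theorem permMat_mul_Qmat (n : ℕ) (hn : 1 ≤ n) (q : Fin n → Fin n → ℂ)
    (g : Equiv.Perm (Fin n)) (a b : Fin n) :
    permMat n g * Qmat n q a b = Qmat n q (g a) (g b) * permMat n g :=
  permMat_mul_Qmat_general n q g a b
end

section
/- For every g ∈ S_n, the product of the diagonal matrices Q_{a,b} over all inversions (a,b) ∈ I(g⁻¹), multiplied on the right by the permutation matrix P(g), equals M_q(g); that is, (∏_{(a,b)∈I(g⁻¹)} Q_{a,b})·P(g) = M_q(g). Equivalently, the representation ρ applied to the element g* = (∏_{(a,b)∈I(g⁻¹)} X_{a,b})·g of the twisted group algebra sends the basis vector indexed by τ to ∏_{(a,b)∈I(g)} q(τ(b), τ(a)) times the basis vector indexed by τ∘g⁻¹. -/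
/-- The set of inversions `I(g) = {(a,b) : a < b and g(a) > g(b)}` of a permutation. -/
def invSet {n : ℕ} (g : Equiv.Perm (Fin n)) : Finset (Fin n × Fin n) :=
  Finset.univ.filter fun p => p.1 < p.2 ∧ g p.2 < g p.1

/-- The matrix `M_q(g)` of `ρ(g*)`, with `(σ,τ)`-entry `∏_{(a,b) ∈ I(g)} q (τ b) (τ a)`
if `σ = τ ∘ g⁻¹` and `0` otherwise. -/
def twistMat (n : ℕ) (q : Fin n → Fin n → ℂ) (g : Equiv.Perm (Fin n)) : PermMatrix n :=
  fun σ τ => if σ = τ * g⁻¹ then ∏ p ∈ invSet g, q (τ p.2) (τ p.1) else 0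

theorem Matrix.noncommProd_diagonal {ι m R : Type*} [Fintype m] [DecidableEq m] [CommSemiring R]
    (s : Finset ι) (d : ι → m → R)
    (h : (s : Set ι).Pairwise (Function.onFun Commute fun i => diagonal (d i))) :
    s.noncommProd (fun i => diagonal (d i)) h = diagonal (∏ i ∈ s, d i) := by
  have hd := (s.map_noncommProd d (fun _ _ _ _ _ => Commute.all _ _)
    (diagonalRingHom m R).toMonoidHom).symm
  rwa [Finset.noncommProd_eq_prod] at hd

theorem noncommProd_Qmat {n : ℕ} (q : Fin n → Fin n → ℂ) (s : Finset (Fin n × Fin n))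
    (h : (s : Set (Fin n × Fin n)).Pairwise (Function.onFun Commute fun p => Qmat n q p.1 p.2)) :
    s.noncommProd (fun p => Qmat n q p.1 p.2) h =
      Matrix.diagonal fun τ => ∏ p ∈ s, q (τ p.1) (τ p.2) := by
  rw [← Finset.prod_fn]
  exact Matrix.noncommProd_diagonal s (fun p (τ : Equiv.Perm (Fin n)) => q (τ p.1) (τ p.2)) h

theorem diagonal_mul_permMat {n : ℕ} (d : Equiv.Perm (Fin n) → ℂ)
    (g : Equiv.Perm (Fin n)) (σ τ : Equiv.Perm (Fin n)) :
    (Matrix.diagonal d * permMat n g) σ τ = if σ = τ * g⁻¹ then d σ else 0 := by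
  rw [Matrix.diagonal_mul, permMat, mul_ite, mul_one, mul_zero]

theorem prod_invSet_inv {n : ℕ} {M : Type*} [CommMonoid M] (g : Equiv.Perm (Fin n))
    (f : Fin n → Fin n → M) :
    ∏ p ∈ invSet g⁻¹, f p.1 p.2 = ∏ p ∈ invSet g, f (g p.2) (g p.1) := by
  refine Finset.prod_nbij' (fun p => (g⁻¹ p.2, g⁻¹ p.1)) (fun p => (g p.2, g p.1))
    ?_ ?_ ?_ ?_ ?_ <;>
  · intro p hp
    simp_all [invSet]

/-- The (pairwise commuting) diagonal matrices `Q_{a,b}`, multiplied over all inversions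
`(a,b) ∈ I(g⁻¹)` and then multiplied on the right by the permutation matrix `P(g)`,
give exactly the matrix `M_q(g)` of `ρ(g*)`. -/
theorem prod_Qmat_mul_permMat (n : ℕ) (q : Fin n → Fin n → ℂ)
    (g : Equiv.Perm (Fin n)) :
    (invSet g⁻¹).noncommProd (fun p => Qmat n q p.1 p.2)
        (fun x _ y _ _ => by
          show _ * _ = _ * _
          unfold Qmat
          rw [Matrix.diagonal_mul_diagonal, Matrix.diagonal_mul_diagonal]
          exact congrArg Matrix.diagonal (funext fun τ => mul_comm _ _)) *
      permMat n g = twistMat n q g := by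
  refine (congrArg (· * permMat n g) (noncommProd_Qmat q _ _)).trans ?_
  ext σ τ
  rw [diagonal_mul_permMat, twistMat]
  split_ifs with hσ
  · rw [hσ, prod_invSet_inv g fun a b => q ((τ * g⁻¹) a) ((τ * g⁻¹) b)]
    simp only [Equiv.Perm.mul_apply, Equiv.Perm.coe_inv, Equiv.symm_apply_apply]
  · rfl
end

section
/- In the polynomial ring R_n = MvPolynomial ((Fin n) × (Fin n)) ℂ with variables X_{a,b}, let S_n act by permuting variables via g • X_{a,b} = X_{g(a),g(b)}. Then for all g₁, g₂ ∈ S_n: (∏_{(a,b)∈I(g₁⁻¹)} X_{a,b}) · (g₁ • ∏_{(a,b)∈I(g₂⁻¹)} X_{a,b}) = (∏_{(a,b)∈I(g₁⁻¹)∖I((g₁g₂)⁻¹)} X_{a,b}) · (∏_{(a,b)∈I((g₁g₂)⁻¹)} X_{a,b}). (This is the multiplication rule g₁*·g₂* = X(g₁,g₂)·(g₁g₂)* in the twisted group algebra A(S_n).) -/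
/-!
Write `D(u, v)` for the ordered pairs `(x, y)` with `u x < u y` and `v y < v x`, so that
`I(g) = D(id, g)` and `g₁ • X_{I(g₂⁻¹)} = X_{D(g₁⁻¹, (g₁g₂)⁻¹)}`. For injective `u, v, w`, sorting a
pair `x ≠ y` by the three signs of comparison under `u, v, w` shows that `D(u, v) ⊔ D(v, w)` is
`D(u, w)` together with both orientations of every pair of `D(u, v) \ D(u, w)`; taking the
product of the variables over both sides gives the rule.
-/

open MvPolynomial

open Finset

section DiscordantPairs

variable {α β : Type*} [Fintype α] [LinearOrder β]

def discordantPairs (u v : α → β) : Finset (α × α) :=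
  univ.filter fun p => u p.1 < u p.2 ∧ v p.2 < v p.1

@[simp]
lemma mem_discordantPairs {u v : α → β} {p : α × α} :
    p ∈ discordantPairs u v ↔ u p.1 < u p.2 ∧ v p.2 < v p.1 := by
  simp [discordantPairs]

lemma disjoint_discordantPairs (u v w : α → β) :
    Disjoint (discordantPairs u v) (discordantPairs v w) :=
  disjoint_left.2 fun _ h h' => (mem_discordantPairs.1 h).2.asymm (mem_discordantPairs.1 h').1

lemma map_swap_discordantPairs (u v : α → β) :
    (discordantPairs u v).map (Equiv.prodComm α α).toEmbedding = discordantPairs v u := by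
  ext ⟨x, y⟩
  simp [and_comm]

variable [DecidableEq α]

lemma image_discordantPairs (e : α ≃ α) (u v : α → β) :
    (discordantPairs u v).image (fun p => (e p.1, e p.2)) =
      discordantPairs (u ∘ e.symm) (v ∘ e.symm) := by
  ext ⟨x, y⟩
  simp only [mem_image, mem_discordantPairs, Prod.mk.injEq, Prod.exists, Function.comp_apply]
  constructor
  · rintro ⟨a, b, h, rfl, rfl⟩
    simpa using h
  · exact fun h => ⟨e.symm x, e.symm y, h, by simp, by simp⟩

variable {u v w : α → β}

lemma discordantPairs_union_discordantPairs (hu : Function.Injective u)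
    (hv : Function.Injective v) (hw : Function.Injective w) :
    discordantPairs u v ∪ discordantPairs v w =
      (discordantPairs u v \ discordantPairs u w ∪
        (discordantPairs u v \ discordantPairs u w).map (Equiv.prodComm α α).toEmbedding) ∪
        discordantPairs u w := by
  ext ⟨x, y⟩
  simp only [mem_union, mem_sdiff, mem_map_equiv, mem_discordantPairs, Equiv.prodComm_symm,
    Equiv.prodComm_apply, Prod.fst_swap, Prod.snd_swap]
  rcases eq_or_ne x y with rfl | hxy
  · simp
  rcases (hu.ne hxy).lt_or_gt with hu | hu <;> rcases (hv.ne hxy).lt_or_gt with hv | hv <;>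
    rcases (hw.ne hxy).lt_or_gt with hw | hw <;> simp [hu, hv, hw, hu.asymm, hv.asymm, hw.asymm]

lemma prod_discordantPairs_mul_prod_discordantPairs {M : Type*} [CommMonoid M]
    (hu : Function.Injective u) (hv : Function.Injective v) (hw : Function.Injective w)
    (f : α × α → M) :
    (∏ p ∈ discordantPairs u v, f p) * ∏ p ∈ discordantPairs v w, f p =
      (∏ p ∈ discordantPairs u v \ discordantPairs u w, f p * f p.swap) *
        ∏ p ∈ discordantPairs u w, f p := by
  set s := discordantPairs u v \ discordantPairs u w
  have hs_swap : s.map (Equiv.prodComm α α).toEmbedding ⊆ discordantPairs v u :=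
    (map_subset_map.2 sdiff_subset).trans (map_swap_discordantPairs u v).le
  have hswap : Disjoint s (s.map (Equiv.prodComm α α).toEmbedding) :=
    (disjoint_discordantPairs u v u).mono sdiff_subset hs_swap
  have hrest : Disjoint (s ∪ s.map (Equiv.prodComm α α).toEmbedding) (discordantPairs u w) :=
    disjoint_union_left.2 ⟨sdiff_disjoint, (disjoint_discordantPairs v u w).mono_left hs_swap⟩
  rw [← prod_union (disjoint_discordantPairs u v w),
    discordantPairs_union_discordantPairs hu hv hw, prod_union hrest, prod_union hswap,
    prod_map, prod_mul_distrib]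
  rfl

end DiscordantPairs

lemma invSet_eq_discordantPairs {n : ℕ} (g : Equiv.Perm (Fin n)) :
    invSet g = discordantPairs id g := rfl

lemma rename_prod_X {σ τ R : Type*} [CommSemiring R] [DecidableEq τ] {f : σ → τ}
    (hf : Function.Injective f) (s : Finset σ) :
    rename f (∏ p ∈ s, (X p : MvPolynomial σ R)) = ∏ p ∈ s.image f, X p := by
  rw [map_prod, prod_image hf.injOn]
  simp only [rename_X]

theorem twisted_mul_rule_general (n : ℕ) (g₁ g₂ : Equiv.Perm (Fin n)) :
    (∏ p ∈ invSet g₁⁻¹, (X p : MvPolynomial (Fin n × Fin n) ℂ)) *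
        MvPolynomial.rename (fun p : Fin n × Fin n => (g₁ p.1, g₁ p.2))
          (∏ p ∈ invSet g₂⁻¹, (X p : MvPolynomial (Fin n × Fin n) ℂ)) =
      (∏ p ∈ invSet g₁⁻¹ \ invSet (g₁ * g₂)⁻¹,
          (X p * X (p.2, p.1) : MvPolynomial (Fin n × Fin n) ℂ)) *
        ∏ p ∈ invSet (g₁ * g₂)⁻¹, (X p : MvPolynomial (Fin n × Fin n) ℂ) := by
  have hinj : Function.Injective fun p : Fin n × Fin n => (g₁ p.1, g₁ p.2) :=
    (Equiv.prodCongr g₁ g₁).injective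
  simp only [rename_prod_X hinj, invSet_eq_discordantPairs, image_discordantPairs]
  exact prod_discordantPairs_mul_prod_discordantPairs Function.injective_id
    (g₁⁻¹).injective (g₁ * g₂)⁻¹.injective (X ·)

/-- In the polynomial ring `R_n = MvPolynomial ((Fin n) × (Fin n)) ℂ`, where `S_n` acts by
permuting variables via `g • X_{a,b} = X_{g(a),g(b)}` (i.e. by `rename`), the product
`g₁* · g₂* = X(g₁,g₂) · (g₁g₂)*` rule of the twisted group algebra `A(S_n)` holds:
`(∏_{(a,b)∈I(g₁⁻¹)} X_{a,b}) · (g₁ • ∏_{(a,b)∈I(g₂⁻¹)} X_{a,b})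
  = (∏_{(a,b)∈I(g₁⁻¹)∖I((g₁g₂)⁻¹)} X_{{a,b}}) · (∏_{(a,b)∈I((g₁g₂)⁻¹)} X_{a,b})`,
where `X_{{a,b}} = X_{a,b} · X_{b,a}` is the product of the two orientations of the
variable indexed by the unordered pair `{a,b}`. -/
theorem twisted_mul_rule (n : ℕ) (hn : 1 ≤ n) (g₁ g₂ : Equiv.Perm (Fin n)) :
    (∏ p ∈ invSet g₁⁻¹, (X p : MvPolynomial (Fin n × Fin n) ℂ)) *
        MvPolynomial.rename (fun p : Fin n × Fin n => (g₁ p.1, g₁ p.2))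
          (∏ p ∈ invSet g₂⁻¹, (X p : MvPolynomial (Fin n × Fin n) ℂ)) =
      (∏ p ∈ invSet g₁⁻¹ \ invSet (g₁ * g₂)⁻¹,
          (X p * X (p.2, p.1) : MvPolynomial (Fin n × Fin n) ℂ)) *
        ∏ p ∈ invSet (g₁ * g₂)⁻¹, (X p : MvPolynomial (Fin n × Fin n) ℂ) :=
  twisted_mul_rule_general n g₁ g₂
end

section
/- Every permutation g ∈ S_n can be written uniquely as an ordered product of cycles g = t_{k_n,n} · t_{k_{n-1},n-1} ⋯ t_{k_2,2} · t_{k_1,1}, where for each j the index k_j satisfies j ≤ k_j ≤ n. That is, the map sending a tuple (k_1, …, k_n) with j ≤ k_j ≤ n to the product t_{k_n,n}·t_{k_{n-1},n-1}⋯t_{k_1,1} is a bijection onto S_n. -/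
/-!
The partial product `P_m = t_{k_{n-1},n-1} ⋯ t_{k_m,m}` fixes every `i < m` (each factor does)
and sends `k_m` to `m`. Hence `k_m = P_m⁻¹ m` and `P_{m+1} = P_m t_{k_m,m}⁻¹`, so the whole
tuple is read off from `P_0` by downward induction on `m`. The product map is therefore
injective, and it is bijective because there are `n (n-1) ⋯ 1 = n!` admissible tuples.
-/

/-- `IsTCycle a b s` says that `s` is the cycle `t_{b,a}` (for `a ≤ b`):
`s i = i + 1` for `a ≤ i ≤ b - 1`, `s b = a`, and `s i = i` otherwise
(in particular `t_{b,b} = id`). -/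
def IsTCycle {n : ℕ} (a b : Fin n) (s : Equiv.Perm (Fin n)) : Prop :=
  (∀ i : Fin n, a ≤ i → i < b → (s i : ℕ) = (i : ℕ) + 1) ∧ s b = a ∧
    ∀ i : Fin n, ¬(a ≤ i ∧ i ≤ b) → s i = i

open Equiv
open scoped Nat

theorem Fin.card_subtype_forall_le_apply (n : ℕ) :
    Fintype.card {f : Fin n → Fin n // ∀ j, j ≤ f j} = n ! := by
  rw [Fintype.card_congr Equiv.subtypePiEquivPi, Fintype.card_pi]
  simp only [Fintype.card_subtype, Finset.filter_le_eq_Ici, Fin.card_Ici]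
  rw [Fin.prod_univ_eq_prod_range (fun j => n - j), ← Finset.prod_range_reflect,
    ← Finset.prod_range_add_one_eq_factorial]
  refine Finset.prod_congr rfl fun j hj => ?_
  have := Finset.mem_range.1 hj
  omega

theorem IsTCycle.apply_of_lt {n : ℕ} {a b i : Fin n} {s : Perm (Fin n)} (hs : IsTCycle a b s)
    (hi : i < a) : s i = i :=
  hs.2.2 i fun h => (h.1.trans_lt hi).false

section TailProd

variable {n : ℕ} (t : Fin n → Fin n → Perm (Fin n)) (k : Fin n → Fin n)

/-- `t_{k_{n-1},n-1} ⋯ t_{k_m,m}`, with `0`-based indices. -/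
def tailProd (m : ℕ) : Perm (Fin n) :=
  (((List.finRange n).drop m).reverse.map fun j => t (k j) j).prod

theorem tailProd_of_le {m : ℕ} (hm : n ≤ m) : tailProd t k m = 1 := by
  rw [tailProd, List.drop_eq_nil_of_le (by simpa using hm)]
  simp

theorem tailProd_of_lt {m : ℕ} (hm : m < n) :
    tailProd t k m = tailProd t k (m + 1) * t (k ⟨m, hm⟩) ⟨m, hm⟩ := by
  rw [tailProd, List.drop_eq_getElem_cons (by simpa using hm), List.reverse_cons,
    List.map_append, List.prod_append]
  simp [tailProd]

variable {t k}
variable (ht : ∀ a b : Fin n, a ≤ b → IsTCycle a b (t b a)) (hk : ∀ j, j ≤ k j)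
include ht hk

theorem tailProd_apply_of_lt (m : ℕ) {i : Fin n} (hi : (i : ℕ) < m) : tailProd t k m i = i := by
  by_cases hm : m < n
  · rw [tailProd_of_lt t k hm, Perm.mul_apply, (ht _ _ (hk _)).apply_of_lt hi,
      tailProd_apply_of_lt (m + 1) (by omega)]
  · rw [tailProd_of_le t k (by omega), Perm.one_apply]
termination_by n - m

theorem tailProd_apply_self {m : ℕ} (hm : m < n) : tailProd t k m (k ⟨m, hm⟩) = ⟨m, hm⟩ := by
  rw [tailProd_of_lt t k hm, Perm.mul_apply, (ht _ _ (hk _)).2.1]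
  exact tailProd_apply_of_lt ht hk (m + 1) (Nat.lt_succ_self m)

end TailProd

/-- The last factor is recovered as `k_m = (t_{k_{n-1},n-1} ⋯ t_{k_m,m})⁻¹ m`. -/
theorem eq_of_tailProd_eq {n : ℕ} {t : Fin n → Fin n → Perm (Fin n)}
    (ht : ∀ a b : Fin n, a ≤ b → IsTCycle a b (t b a)) {k k' : Fin n → Fin n}
    (hk : ∀ j, j ≤ k j) (hk' : ∀ j, j ≤ k' j) (m : ℕ) (h : tailProd t k m = tailProd t k' m)
    (j : Fin n) (hj : m ≤ (j : ℕ)) : k j = k' j := by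
  have hm : m < n := hj.trans_lt j.isLt
  have hkm : k ⟨m, hm⟩ = k' ⟨m, hm⟩ := (tailProd t k' m).injective <| by
    rw [tailProd_apply_self ht hk', ← h, tailProd_apply_self ht hk]
  rcases hj.eq_or_lt with rfl | hlt
  · exact hkm
  · refine eq_of_tailProd_eq ht hk hk' (m + 1) ?_ j hlt
    rwa [tailProd_of_lt t k hm, tailProd_of_lt t k' hm, hkm, mul_left_inj] at h
termination_by n - m

theorem cycle_decomposition_bijective_general (n : ℕ)
    (t : Fin n → Fin n → Equiv.Perm (Fin n))
    (ht : ∀ a b : Fin n, a ≤ b → IsTCycle a b (t b a)) :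
    Function.Bijective
      (fun k : {f : Fin n → Fin n // ∀ j, j ≤ f j} =>
        ((List.finRange n).reverse.map fun j => t (k.1 j) j).prod) := by
  rw [Fintype.bijective_iff_injective_and_card, Fin.card_subtype_forall_le_apply,
    Fintype.card_perm, Fintype.card_fin]
  refine ⟨fun k k' h => Subtype.ext (funext fun j => ?_), rfl⟩
  exact eq_of_tailProd_eq ht k.2 k'.2 0 h j (Nat.zero_le _)

/-- Every permutation `g ∈ S_n` can be written uniquely as an ordered product of cycles
`g = t_{k_n,n} · t_{k_{n-1},n-1} ⋯ t_{k_2,2} · t_{k_1,1}` with `j ≤ k_j ≤ n` for each `j`: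
the map sending such a tuple `(k_1, …, k_n)` to this product is a bijection onto `S_n`. -/
theorem cycle_decomposition_bijective (n : ℕ) (hn : 1 ≤ n)
    (t : Fin n → Fin n → Equiv.Perm (Fin n))
    (ht : ∀ a b : Fin n, a ≤ b → IsTCycle a b (t b a)) :
    Function.Bijective
      (fun k : {f : Fin n → Fin n // ∀ j, j ≤ f j} =>
        ((List.finRange n).reverse.map fun j => t (k.1 j) j).prod) :=
  cycle_decomposition_bijective_general n t ht
end

section
/- For all a < b in Fin n, the (b−a+1)-st power of the matrix M_q(t_{b,a}) is the diagonal matrix whose diagonal entry at τ ∈ S_n equals σ_T, where T = {τ(a), τ(a+1), …, τ(b)} is the image under τ of the interval [a,b]. -/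
/-- `σ_T = ∏_{i,j ∈ T, i ≠ j} q i j`, the product over all ordered pairs of distinct
elements of `T`. -/
def sigmaT {n : ℕ} (q : Fin n → Fin n → ℂ) (T : Finset (Fin n)) : ℂ :=
  ∏ p ∈ (T ×ˢ T).filter fun p => p.1 ≠ p.2, q p.1 p.2

/-! `M_q(g)` is a monomial matrix: column `τ` has its single entry `w(τ)` in row `τ g⁻¹`. Its
`m`-th power is again monomial, for `g⁻ᵐ`, with weight `∏_{j<m} w(τ g⁻ʲ)`, so for the cycle
`t = t_{b,a}` of order `k = b - a + 1` the `k`-th power is diagonal. The inversions of `t` are the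
pairs `(x, b)` with `a ≤ x < b`, and `t⁻ʲ` maps `[a,b) = [a,b] \ {b}` onto `[a,b] \ {t⁻ʲ b}`,
while `t⁻ʲ b = b - j` runs once through `[a,b]` for `j < k`. Hence the diagonal entry at `τ`
contains every factor `q(τ u, τ v)` with `u ≠ v` in `[a,b]` exactly once. -/

open Finset

section MonomialMatrix

variable {G R : Type*} [Group G] [DecidableEq G] [CommSemiring R]

def monomialMatrix (h : G) (w : G → R) : Matrix G G R :=
  fun σ τ => if σ = τ * h then w τ else 0

theorem monomialMatrix_pow [Fintype G] (h : G) (w : G → R) (m : ℕ) :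
    monomialMatrix h w ^ m = monomialMatrix (h ^ m) fun τ => ∏ j ∈ range m, w (τ * h ^ j) := by
  induction m with
  | zero => ext σ τ; simp [monomialMatrix, Matrix.one_apply]
  | succ m ih =>
    ext σ τ
    rw [pow_succ, ih, Matrix.mul_apply, sum_eq_single (τ * h)]
    · simp only [monomialMatrix, mul_assoc, ← pow_succ', prod_range_succ', pow_zero,
        mul_one]
      split_ifs <;> simp
    · intro ρ _ hρ
      simp [monomialMatrix, hρ]
    · simp

theorem monomialMatrix_one (w : G → R) : monomialMatrix 1 w = Matrix.diagonal w := by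
  ext σ τ
  by_cases h : σ = τ <;> simp [monomialMatrix, h]

end MonomialMatrix

section sigmaT

variable {n : ℕ} (q : Fin n → Fin n → ℂ)

theorem sigmaT_eq_prod_erase (T : Finset (Fin n)) :
    sigmaT q T = ∏ u ∈ T, ∏ v ∈ T.erase u, q u v := by
  rw [sigmaT, prod_filter, prod_product]
  refine prod_congr rfl fun u _ => ?_
  rw [← prod_filter, filter_ne]

theorem sigmaT_image (T : Finset (Fin n)) {τ : Fin n → Fin n} (hτ : Function.Injective τ) :
    sigmaT q (T.image τ) = ∏ u ∈ T, ∏ v ∈ T.erase u, q (τ u) (τ v) := by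
  rw [sigmaT_eq_prod_erase, prod_image hτ.injOn]
  refine prod_congr rfl fun u _ => ?_
  rw [← image_erase hτ, prod_image hτ.injOn]

end sigmaT

namespace IsTCycle

variable {n : ℕ} {a b : Fin n} {s : Equiv.Perm (Fin n)}

theorem le (hs : IsTCycle a b s) : a ≤ b := by
  by_contra h
  have hb := hs.2.2 b fun h' => h h'.1
  rw [hs.2.1] at hb
  exact h hb.le

theorem apply_val (hs : IsTCycle a b s) (i : Fin n) :
    (s i : ℕ) = if a ≤ i ∧ i < b then (i : ℕ) + 1 else if i = b then (a : ℕ) else i := by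
  split_ifs with h₁ h₂
  · exact hs.1 i h₁.1 h₁.2
  · rw [h₂, hs.2.1]
  · rw [hs.2.2 i fun h => (lt_or_eq_of_le h.2).elim (fun h' => h₁ ⟨h.1, h'⟩) h₂]

theorem invSet_eq (hs : IsTCycle a b s) : invSet s = (Ico a b).image fun x => (x, b) := by
  ext ⟨x, y⟩
  have hx := hs.apply_val x
  have hy := hs.apply_val y
  have hab := Fin.le_def.mp hs.le
  simp only [invSet, mem_filter, mem_univ, true_and, mem_image, mem_Ico, Prod.mk.injEq,
    Fin.lt_def, Fin.le_def, Fin.ext_iff] at hx hy ⊢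
  constructor
  · rintro ⟨hxy, hsyx⟩
    exact ⟨x, by split_ifs at hx hy <;> omega⟩
  · rintro ⟨x', h, hx', hy'⟩
    split_ifs at hx hy <;> omega

theorem inv_apply_val (hs : IsTCycle a b s) {x : Fin n} (hax : a < x) (hxb : x ≤ b) :
    (s⁻¹ x : ℕ) = x - 1 := by
  rw [Fin.lt_def] at hax
  rw [Fin.le_def] at hxb
  have h : s ⟨x - 1, by omega⟩ = x := by
    ext
    rw [hs.1 _ (Fin.le_def.mpr (show (a : ℕ) ≤ x - 1 by omega))
      (Fin.lt_def.mpr (show (x : ℕ) - 1 < b by omega))]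
    show (x : ℕ) - 1 + 1 = x
    omega
  rw [Equiv.Perm.inv_eq_iff_eq.mpr h.symm]

theorem inv_pow_apply_right_val (hs : IsTCycle a b s) {j : ℕ} (hj : j ≤ b - a) :
    ((s⁻¹ ^ j) b : ℕ) = b - j := by
  induction j with
  | zero => simp
  | succ j ih =>
    have hval := ih (by omega)
    rw [pow_succ', Equiv.Perm.mul_apply, hs.inv_apply_val (by rw [Fin.lt_def]; omega)
      (by rw [Fin.le_def]; omega), hval]
    omega

theorem inv_pow_card (hs : IsTCycle a b s) : s⁻¹ ^ ((b : ℕ) - a + 1) = 1 := by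
  have hab := Fin.le_def.mp hs.le
  have hb : (s⁻¹ ^ ((b : ℕ) - a + 1)) b = b := by
    rw [pow_succ', Equiv.Perm.mul_apply, Equiv.Perm.inv_eq_iff_eq, hs.2.1]
    ext
    rw [hs.inv_pow_apply_right_val le_rfl]
    omega
  ext x : 1
  by_cases hx : a ≤ x ∧ x ≤ b
  · have hxb : (s⁻¹ ^ ((b : ℕ) - x)) b = x := by
      ext
      rw [hs.inv_pow_apply_right_val (by omega)]
      omega
    rw [← hxb, ← Equiv.Perm.mul_apply, ← pow_mul_comm, Equiv.Perm.mul_apply, hb]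
    simp
  · exact Equiv.Perm.pow_apply_eq_self_of_apply_eq_self
      (Equiv.Perm.inv_eq_iff_eq.mpr (hs.2.2 x hx).symm) _

theorem map_inv_pow_Icc (hs : IsTCycle a b s) (j : ℕ) :
    (Icc a b).map (s⁻¹ ^ j).toEmbedding = Icc a b := by
  refine map_perm fun x hx => ?_
  by_contra h
  refine hx (Equiv.Perm.pow_apply_eq_self_of_apply_eq_self
    (Equiv.Perm.inv_eq_iff_eq.mpr (hs.2.2 x ?_).symm) _)
  simpa using h

theorem prod_range_inv_pow_apply_right {M : Type*} [CommMonoid M] (hs : IsTCycle a b s)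
    (F : Fin n → M) :
    ∏ j ∈ range ((b : ℕ) - a + 1), F ((s⁻¹ ^ j) b) = ∏ u ∈ Icc a b, F u := by
  have hab := Fin.le_def.mp hs.le
  refine prod_nbij' (fun j => (s⁻¹ ^ j) b) (fun u => (b : ℕ) - u) ?_ ?_ ?_ ?_ fun _ _ => rfl
  · intro j hj
    rw [mem_range] at hj
    have := hs.inv_pow_apply_right_val (j := j) (by omega)
    simp only [mem_Icc, Fin.le_def]
    omega
  · intro u hu
    simp only [mem_Icc, Fin.le_def] at hu
    simp only [mem_range]
    omega
  · intro j hj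
    rw [mem_range] at hj
    have := hs.inv_pow_apply_right_val (j := j) (by omega)
    omega
  · intro u hu
    simp only [mem_Icc, Fin.le_def] at hu
    ext
    rw [hs.inv_pow_apply_right_val (by omega)]
    omega

theorem prod_range_prod_invSet_eq_sigmaT (hs : IsTCycle a b s) (q : Fin n → Fin n → ℂ)
    (τ : Equiv.Perm (Fin n)) :
    ∏ j ∈ range ((b : ℕ) - a + 1), ∏ p ∈ invSet s,
        q ((τ * s⁻¹ ^ j) p.2) ((τ * s⁻¹ ^ j) p.1) =
      sigmaT q ((Icc a b).image τ) := by
  rw [sigmaT_image _ _ τ.injective, ← hs.prod_range_inv_pow_apply_right]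
  refine prod_congr rfl fun j _ => ?_
  have herase : (Icc a b).erase ((s⁻¹ ^ j) b) = ((Icc a b).erase b).map (s⁻¹ ^ j).toEmbedding := by
    rw [map_erase, hs.map_inv_pow_Icc]
    rfl
  rw [hs.invSet_eq, prod_image fun x _ y _ h => (Prod.mk.inj h).1, ← Icc_erase_right, herase,
    prod_map]
  rfl

end IsTCycle

theorem twistMat_pow_cycle_general (n : ℕ) (q : Fin n → Fin n → ℂ)
    (a b : Fin n) (s : Equiv.Perm (Fin n)) (hs : IsTCycle a b s) :
    twistMat n q s ^ ((b : ℕ) - (a : ℕ) + 1) =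
      Matrix.diagonal fun τ : Equiv.Perm (Fin n) =>
        sigmaT q ((Finset.Icc a b).image τ) := by
  rw [show twistMat n q s = monomialMatrix s⁻¹ _ from rfl, monomialMatrix_pow, hs.inv_pow_card,
    monomialMatrix_one]
  simp_rw [hs.prod_range_prod_invSet_eq_sigmaT]

/-- For `a < b` in `Fin n`, the `(b−a+1)`-st power of `M_q(t_{b,a})` is the diagonal
matrix whose diagonal entry at `τ` equals `σ_T`, where `T = τ([a,b])` is the image
under `τ` of the interval `[a,b]`. -/
theorem twistMat_pow_cycle (n : ℕ) (hn : 1 ≤ n) (q : Fin n → Fin n → ℂ)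
    (a b : Fin n) (hab : a < b) (s : Equiv.Perm (Fin n)) (hs : IsTCycle a b s) :
    twistMat n q s ^ ((b : ℕ) - (a : ℕ) + 1) =
      Matrix.diagonal fun τ : Equiv.Perm (Fin n) =>
        sigmaT q ((Finset.Icc a b).image τ) :=
  twistMat_pow_cycle_general n q a b s hs
end

section
/- For every k with 1 ≤ k ≤ n−1, the determinant of the ordered product C_{Q,n−k+1} := (I − M_q(t_{n,k}))·(I − M_q(t_{n−1,k}))⋯(I − M_q(t_{k+1,k})) factors as det C_{Q,n−k+1} = ∏_{m=2}^{n−k+1} ∏_{T} (1 − σ_T)^{(m−1)!·(n−m)!}, where the inner product runs over all subsets T ⊆ Fin n of cardinality m. -/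
/-!
`M_q(g)` is a weighted right translation by `g` on the group algebra of `S_n`, so `I - M_q(g)`
is block diagonal along the left cosets of `⟨g⟩`; each block is `1` minus a weighted cyclic
shift, whose determinant is `1 -` the product of the weights around the cycle.
For the cycle `g = t_{m,k}` the inversions are the pairs `(a, m)` with `k ≤ a < m`, and
the weights around the coset `τ⟨g⟩` multiply to `σ_{τ[k,m]}`. A subset `T` of size
`d = m - k + 1` is `τ[k,m]` for `d!(n-d)!` permutations `τ`, that is for `(d-1)!(n-d)!`
cosets. The determinant of the ordered product is the product of these determinants.
-/

open Finset Matrix Subgroup Equiv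

section ZPowersCosets

variable {G : Type*} [Group G]

lemma QuotientGroup.mk_out_mul_pow (g : G) (o : G ⧸ zpowers g) (j : ℕ) :
    ((o.out * g ^ j : G) : G ⧸ zpowers g) = o := by
  rw [QuotientGroup.mk_mul_of_mem _ (pow_mem (mem_zpowers g) j), QuotientGroup.out_eq']

variable [Fintype G]

noncomputable def zpowersCosetEquiv (g : G) : Fin (orderOf g) × (G ⧸ zpowers g) ≃ G :=
  Equiv.ofBijective (fun p => p.2.out * g ^ (p.1 : ℕ)) <| by
    refine (Fintype.bijective_iff_injective_and_card _).2 ⟨?_, ?_⟩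
    · rintro ⟨i, o⟩ ⟨j, o'⟩ h
      obtain rfl : o = o' := by
        simpa only [QuotientGroup.mk_out_mul_pow] using congrArg ((↑) : G → G ⧸ zpowers g) h
      have := (pow_eq_pow_iff_modEq.1 (mul_left_cancel h)).eq_of_lt_of_lt i.isLt j.isLt
      exact Prod.ext (Fin.ext this) rfl
    · rw [Fintype.card_prod, Fintype.card_fin, ← Nat.card_zpowers, ← Nat.card_eq_fintype_card,
        ← Nat.card_eq_fintype_card, ← index, card_mul_index]

@[simp]
lemma zpowersCosetEquiv_apply (g : G) (i : Fin (orderOf g)) (o : G ⧸ zpowers g) :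
    zpowersCosetEquiv g (i, o) = o.out * g ^ (i : ℕ) := rfl

lemma zpowersCosetEquiv_eq_mul_inv_iff (g : G) {i j : Fin (orderOf g)} {o o' : G ⧸ zpowers g} :
    zpowersCosetEquiv g (i, o) = zpowersCosetEquiv g (j, o') * g⁻¹ ↔
      o = o' ∧ ((i : ℕ) + 1) % orderOf g = j := by
  simp only [zpowersCosetEquiv_apply]
  constructor
  · intro h
    obtain rfl : o = o' := by
      have := congrArg ((↑) : G → G ⧸ zpowers g) h
      rwa [QuotientGroup.mk_out_mul_pow, mul_assoc, QuotientGroup.mk_mul_of_mem _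
        (mul_mem (pow_mem (mem_zpowers g) _) (inv_mem (mem_zpowers g))),
        QuotientGroup.out_eq'] at this
    refine ⟨rfl, ?_⟩
    rw [mul_assoc, mul_right_inj, eq_mul_inv_iff_mul_eq, ← pow_succ, pow_eq_pow_iff_modEq] at h
    rw [h, Nat.mod_eq_of_lt j.isLt]
  · rintro ⟨rfl, h⟩
    rw [mul_assoc, mul_right_inj, eq_mul_inv_iff_mul_eq, ← pow_succ, ← h, pow_mod_orderOf]

lemma orderOf_mul_card_filter_out {β : Type*} [DecidableEq β] (g : G) (φ : G → β)
    (hφ : ∀ x, φ (x * g) = φ x) (b : β) :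
    orderOf g * #{o : G ⧸ zpowers g | φ o.out = b} = #{x | φ x = b} := by
  have hpow : ∀ x (j : ℕ), φ (x * g ^ j) = φ x := by
    intro x j
    induction j with
    | zero => simp
    | succ j ih => rw [pow_succ, ← mul_assoc, hφ, ih]
  calc orderOf g * #{o : G ⧸ zpowers g | φ o.out = b}
      = #(univ ×ˢ ({o : G ⧸ zpowers g | φ o.out = b} : Finset _)) := by
        rw [card_product, card_univ, Fintype.card_fin]
    _ = #{x | φ x = b} := card_equiv (zpowersCosetEquiv g) (by simp [hpow])

end ZPowersCosets

section Determinants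

variable {R : Type*} [CommRing R]

def cyclicShiftMatrix {d : ℕ} (v : Fin d → R) : Matrix (Fin d) (Fin d) R :=
  of fun i j => if ((i : ℕ) + 1) % d = j then v j else 0

lemma one_sub_cyclicShiftMatrix_apply {d : ℕ} (v : Fin d → R) (i j : Fin d) :
    (1 - cyclicShiftMatrix v) i j = (if (i : ℕ) = j then 1 else 0) -
      if (if (i : ℕ) + 1 = d then 0 else (i : ℕ) + 1) = j then v j else 0 := by
  have : ((i : ℕ) + 1) % d = if (i : ℕ) + 1 = d then 0 else (i : ℕ) + 1 := by
    split_ifs with h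
    · simp [h]
    · exact Nat.mod_eq_of_lt (by omega)
  simp [cyclicShiftMatrix, one_apply, Fin.ext_iff, this]

theorem det_one_sub_cyclicShiftMatrix {d : ℕ} (hd : 0 < d) (v : Fin d → R) :
    (1 - cyclicShiftMatrix v).det = 1 - ∏ j, v j := by
  obtain ⟨e, rfl⟩ : ∃ e, d = e + 1 := ⟨d - 1, by omega⟩
  rcases e with _ | e
  · simp [cyclicShiftMatrix]
  have hM := one_sub_cyclicShiftMatrix_apply v
  -- Expand along column 0: only rows 0 and `last` contribute, and both minors are triangular.
  have hcol : ∀ i, (1 - cyclicShiftMatrix v) i 0 =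
      if i = 0 then 1 else if i = Fin.last (e + 1) then -v 0 else 0 := by
    intro i
    simp only [hM, Fin.ext_iff, Fin.val_zero, Fin.val_last]
    grind
  have hminor0 : ((1 - cyclicShiftMatrix v).submatrix Fin.succ Fin.succ).det = 1 := by
    rw [det_of_isUpperTriangular]
    · refine prod_eq_one fun i _ => ?_
      simp only [submatrix_apply, hM, Fin.val_succ]
      grind
    · intro i j hij
      have : (j : ℕ) < i := hij
      simp only [submatrix_apply, hM, Fin.val_succ]
      grind
  have hminorLast : ((1 - cyclicShiftMatrix v).submatrix Fin.castSucc Fin.succ).det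
      = ∏ j : Fin (e + 1), -v j.succ := by
    rw [det_of_isLowerTriangular]
    · refine prod_congr rfl fun i _ => ?_
      simp only [submatrix_apply, hM, Fin.val_succ, Fin.val_castSucc]
      grind
    · intro i j hij
      have : (i : ℕ) < j := hij
      simp only [submatrix_apply, hM, Fin.val_succ, Fin.val_castSucc]
      grind
  rw [det_succ_column_zero, Fin.sum_univ_succ, Fin.sum_univ_castSucc]
  simp [hcol, Fin.succ_ne_zero, hminor0, hminorLast, prod_neg, Fin.prod_univ_succ v]
  have hsign : ((-1 : R) ^ (e + 1)) * (-1) ^ (e + 1) = 1 := by rw [← mul_pow]; simp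
  linear_combination (-(v 0 * ∏ j : Fin (e + 1), v j.succ)) * hsign

variable {G : Type*} [Group G] [Fintype G] [DecidableEq G]

def translationMatrix (g : G) (c : G → R) : Matrix G G R :=
  of fun σ τ => if σ = τ * g⁻¹ then c τ else 0

theorem det_one_sub_translationMatrix (g : G) (c : G → R) :
    (1 - translationMatrix g c).det =
      ∏ o : G ⧸ zpowers g, (1 - ∏ j ∈ range (orderOf g), c (o.out * g ^ j)) := by
  have hblock :
      (1 - translationMatrix g c).submatrix (zpowersCosetEquiv g) (zpowersCosetEquiv g) =
        blockDiagonal fun o => 1 - cyclicShiftMatrix fun j => c (zpowersCosetEquiv g (j, o)) := by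
    ext ⟨i, o⟩ ⟨j, o'⟩
    simp only [submatrix_apply, Matrix.sub_apply, one_apply, EmbeddingLike.apply_eq_iff_eq,
      translationMatrix, of_apply, blockDiagonal_apply, cyclicShiftMatrix,
      zpowersCosetEquiv_eq_mul_inv_iff, Prod.ext_iff]
    by_cases ho : o = o' <;> simp [ho]
  rw [← det_submatrix_equiv_self (zpowersCosetEquiv g), hblock, det_blockDiagonal]
  refine prod_congr rfl fun o _ => ?_
  rw [det_one_sub_cyclicShiftMatrix (orderOf_pos g)]
  simp [Fin.prod_univ_eq_prod_range (fun j => c (o.out * g ^ j))]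

end Determinants

section PermCounting

variable {α : Type*} [Fintype α] [DecidableEq α]

lemma card_filter_image_eq_self (S : Finset α) :
    #{τ : Equiv.Perm α | S.image τ = S} = (#S).factorial * (Fintype.card α - #S).factorial := by
  have key : ∀ τ : Equiv.Perm α,
      S.image τ = S ↔ (fun a => decide (a ∈ S)) ∘ τ = fun a => decide (a ∈ S) := by
    intro τ
    simp only [funext_iff, Function.comp_apply, decide_eq_decide]
    constructor
    · intro h a
      refine ⟨fun ha => ?_, fun ha => h ▸ mem_image_of_mem τ ha⟩
      obtain ⟨b, hb, hba⟩ := mem_image.1 (h.symm ▸ ha)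
      rwa [← τ.injective hba]
    · intro h
      exact eq_of_subset_of_card_le (fun y hy => by
        obtain ⟨a, ha, rfl⟩ := mem_image.1 hy; exact (h a).2 ha)
        (card_image_of_injective _ τ.injective).ge
  rw [← Fintype.card_subtype, Fintype.card_congr (Equiv.subtypeEquivRight key),
    DomMulAct.stabilizer_card]
  simp [Fintype.card_subtype_compl]

lemma card_filter_image_eq {S T : Finset α} (hST : #S = #T) :
    #{τ : Equiv.Perm α | S.image τ = T} = (#S).factorial * (Fintype.card α - #S).factorial := by
  obtain ⟨τ₀, hτ₀⟩ : ∃ τ₀ : Equiv.Perm α, S.image τ₀ = T := by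
    let e : {x // x ∈ S} ≃ {x // x ∈ T} := Fintype.equivOfCardEq (by simpa using hST)
    refine ⟨e.extendSubtype, eq_of_subset_of_card_le (fun y hy => ?_) ?_⟩
    · obtain ⟨x, hx, rfl⟩ := mem_image.1 hy
      exact e.extendSubtype_mem x hx
    · rw [card_image_of_injective _ (Equiv.injective _), hST]
  rw [← card_filter_image_eq_self]
  refine (card_equiv (Equiv.mulLeft τ₀) fun τ => ?_).symm
  simp [← hτ₀, Equiv.Perm.coe_mul, ← image_image, (image_injective τ₀.injective).eq_iff]

end PermCounting

theorem Equiv.Perm.IsCycleOn.prod_range_pow_apply {α M : Type*} [CommMonoid M] {f : Perm α}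
    {s : Finset α} (hf : f.IsCycleOn s) {a : α} (ha : a ∈ s) (F : α → M) :
    ∏ j ∈ range #s, F ((f ^ j) a) = ∏ b ∈ s, F b :=
  prod_nbij (fun j => (f ^ j) a) (fun j _ => (hf.1.mapsTo.perm_pow j) ha)
    (fun i hi j hj h => ((hf.pow_apply_eq_pow_apply ha).1 h).eq_of_lt_of_lt
      (mem_range.1 hi) (mem_range.1 hj))
    (fun b hb => by
      obtain ⟨j, hj, rfl⟩ := hf.exists_pow_eq ha hb
      exact ⟨j, mem_range.2 hj, rfl⟩)
    (fun _ _ => rfl)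

lemma Equiv.Perm.IsCycleOn.image_pow {α : Type*} [DecidableEq α] {f : Perm α} {s : Finset α}
    (hf : f.IsCycleOn s) (j : ℕ) : s.image (f ^ j) = s := by
  rw [← coe_inj, coe_image]
  exact (hf.1.perm_pow j).image_eq

lemma sigmaT_eq_prod_prod_erase {n : ℕ} (q : Fin n → Fin n → ℂ) (T : Finset (Fin n)) :
    sigmaT q T = ∏ b ∈ T, ∏ a ∈ T.erase b, q b a := by
  rw [sigmaT, prod_filter, prod_product]
  exact prod_congr rfl fun b _ => by rw [← prod_filter, filter_ne]

lemma sigmaT_image_s13 {n : ℕ} (q : Fin n → Fin n → ℂ) (S : Finset (Fin n))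
    (τ : Perm (Fin n)) :
    sigmaT q (S.image τ) = ∏ b ∈ S, ∏ a ∈ S.erase b, q (τ b) (τ a) := by
  rw [sigmaT_eq_prod_prod_erase, prod_image τ.injective.injOn]
  refine prod_congr rfl fun b _ => ?_
  rw [← image_erase τ.injective, prod_image τ.injective.injOn]

def invWeight {n : ℕ} (q : Fin n → Fin n → ℂ) (g τ : Perm (Fin n)) : ℂ :=
  ∏ p ∈ invSet g, q (τ p.2) (τ p.1)

lemma twistMat_eq_translationMatrix (n : ℕ) (q : Fin n → Fin n → ℂ) (g : Perm (Fin n)) :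
    twistMat n q g = translationMatrix g (invWeight q g) := rfl

namespace IsTCycle

variable {n : ℕ} {k m : Fin n} {g : Perm (Fin n)}

lemma val_apply (hg : IsTCycle k m g) (i : Fin n) :
    (g i : ℕ) = if k ≤ i ∧ i < m then (i : ℕ) + 1 else if i = m then (k : ℕ) else i := by
  obtain ⟨hshift, hlast, hfix⟩ := hg
  split_ifs with h₁ h₂
  · exact hshift i h₁.1 h₁.2
  · rw [h₂, hlast]
  · rw [hfix i (by fin_omega)]

lemma eq_cycleIcc (hg : IsTCycle k m g) : g = Fin.cycleIcc k m := by
  have : NeZero n := k.neZero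
  obtain ⟨hshift, hlast, hfix⟩ := hg
  ext i
  rcases lt_or_ge i k with hik | hki
  · rw [Fin.cycleIcc_of_lt hik, hfix i (by fin_omega)]
  rcases le_or_gt i m with him | hmi
  · rw [Fin.cycleIcc_of_le_of_le hki him]
    split_ifs with him'
    · rw [him', hlast]
    · rw [hshift i hki (lt_of_le_of_ne him him'), Fin.val_add_one_of_lt' (by fin_omega)]
  · rw [Fin.cycleIcc_of_gt hmi, hfix i (by fin_omega)]

lemma isCycle (hg : IsTCycle k m g) (hkm : k < m) : g.IsCycle :=
  hg.eq_cycleIcc ▸ Fin.isCycle_cycleIcc hkm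

lemma support_eq (hg : IsTCycle k m g) (hkm : k < m) : g.support = Icc k m := by
  obtain ⟨hshift, hlast, hfix⟩ := hg
  ext i
  rw [Perm.mem_support, mem_Icc]
  refine ⟨not_imp_comm.1 (hfix i), fun ⟨hki, him⟩ => ?_⟩
  rcases him.lt_or_eq with him | rfl
  · rw [ne_eq, ← Fin.val_inj, hshift i hki him]
    omega
  · rw [hlast]
    exact hkm.ne

lemma invSet_eq_s13 (hg : IsTCycle k m g) (hkm : k ≤ m) : invSet g = Ico k m ×ˢ {m} := by
  ext ⟨a, b⟩
  simp only [invSet, mem_filter, mem_univ, true_and, mem_product, mem_Ico, mem_singleton,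
    Fin.lt_def, hg.val_apply]
  split_ifs <;> fin_omega

lemma isCycleOn (hg : IsTCycle k m g) (hkm : k < m) : g.IsCycleOn (Icc k m : Finset (Fin n)) := by
  rw [← hg.support_eq hkm, Perm.coe_support_eq_set_support]
  exact (hg.isCycle hkm).isCycleOn

lemma orderOf_eq (hg : IsTCycle k m g) (hkm : k < m) : orderOf g = #(Icc k m) := by
  rw [(hg.isCycle hkm).orderOf, hg.support_eq hkm]

lemma prod_range_invWeight (q : Fin n → Fin n → ℂ) (hg : IsTCycle k m g) (hkm : k < m)
    (τ : Perm (Fin n)) :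
    ∏ j ∈ range (orderOf g), invWeight q g (τ * g ^ j) = sigmaT q ((Icc k m).image τ) := by
  have hcyc := hg.isCycleOn hkm
  have hm : m ∈ Icc k m := right_mem_Icc.2 hkm.le
  have hj : ∀ j : ℕ, invWeight q g (τ * g ^ j) =
      ∏ a ∈ (Icc k m).erase ((g ^ j) m), q (τ ((g ^ j) m)) (τ a) := by
    intro j
    rw [invWeight, hg.invSet_eq_s13 hkm.le, ← Icc_erase_right]
    simp only [prod_product, prod_singleton]
    conv_rhs => rw [← hcyc.image_pow j, ← image_erase (g ^ j).injective,
      prod_image (g ^ j).injective.injOn]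
    rfl
  simp_rw [hj, hg.orderOf_eq hkm, sigmaT_image_s13]
  exact hcyc.prod_range_pow_apply hm fun b => ∏ a ∈ (Icc k m).erase b, q (τ b) (τ a)

theorem det_one_sub_twistMat (q : Fin n → Fin n → ℂ) (hg : IsTCycle k m g) (hkm : k < m)
    {d : ℕ} (hd : (m : ℕ) - k + 1 = d) :
    ((1 : PermMatrix n) - twistMat n q g).det =
      ∏ T ∈ powersetCard d (univ : Finset (Fin n)),
        (1 - sigmaT q T) ^ ((d - 1).factorial * (n - d).factorial) := by
  set S : Finset (Fin n) := Icc k m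
  have hS : #S = d := by rw [Fin.card_Icc]; omega
  have hord : orderOf g = d := (hg.orderOf_eq hkm).trans hS
  rw [twistMat_eq_translationMatrix, det_one_sub_translationMatrix]
  simp_rw [hg.prod_range_invWeight q hkm]
  rw [← prod_fiberwise_of_maps_to (t := powersetCard d univ) (g := fun o => S.image o.out)
    fun o _ => mem_powersetCard.2
      ⟨subset_univ _, by rw [card_image_of_injective _ o.out.injective, hS]⟩]
  refine prod_congr rfl fun T hT => ?_
  rw [prod_congr rfl fun o ho => by rw [(mem_filter.1 ho).2], prod_const]
  congr 1
  have hfiber := orderOf_mul_card_filter_out g (fun τ => S.image τ)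
    (fun τ => by rw [Perm.coe_mul, ← image_image, ← pow_one g, (hg.isCycleOn hkm).image_pow]) T
  rw [card_filter_image_eq (hS.trans (mem_powersetCard.1 hT).2.symm), hord, hS,
    Fintype.card_fin, ← Nat.mul_factorial_pred (by omega : d ≠ 0), mul_assoc] at hfiber
  exact Nat.eq_of_mul_eq_mul_left (by omega) hfiber

end IsTCycle

theorem det_C_factorization_general (n : ℕ) (q : Fin n → Fin n → ℂ)
    (t : Fin n → Fin n → Equiv.Perm (Fin n))
    (ht : ∀ a b : Fin n, a ≤ b → IsTCycle a b (t b a))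
    (k : Fin n) :
    ((((List.finRange n).filter fun m => decide (k < m)).reverse.map
        fun m => (1 : PermMatrix n) - twistMat n q (t m k)).prod).det =
      ∏ m ∈ Finset.Icc 2 (n - (k : ℕ)),
        ∏ T ∈ Finset.powersetCard m (Finset.univ : Finset (Fin n)),
          (1 - sigmaT q T) ^ (Nat.factorial (m - 1) * Nat.factorial (n - m)) := by
  have hlist : ∀ F : Fin n → ℂ,
      (((List.finRange n).filter fun m => decide (k < m)).map F).prod = ∏ m ∈ Ioi k, F m := by
    intro F
    rw [← List.prod_toFinset _ ((List.nodup_finRange n).filter _)]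
    congr 1
    ext m
    simp
  rw [← coe_detMonoidHom, map_list_prod]
  simp only [List.map_reverse, List.prod_reverse, List.map_map]
  rw [hlist]
  refine prod_bij' (fun m _ => (m : ℕ) - k + 1)
    (fun d hd => ⟨k + d - 1, by simp at hd; omega⟩)
    (fun m hm => by simp at hm ⊢; omega) (fun d hd => by simp [Fin.lt_def] at hd ⊢; omega)
    (fun m hm => by simp [Fin.ext_iff] at hm ⊢; omega)
    (fun d hd => by simp at hd ⊢; omega)
    fun m hm => ?_
  have hkm : k < m := mem_Ioi.1 hm
  exact (ht k m hkm.le).det_one_sub_twistMat q hkm rfl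

/-- For `1 ≤ k ≤ n−1`, the determinant of the ordered product
`C_{Q,n−k+1} = (I − M_q(t_{n,k})) · (I − M_q(t_{n−1,k})) ⋯ (I − M_q(t_{k+1,k}))`
factors as `∏_{m=2}^{n−k+1} ∏_T (1 − σ_T)^{(m−1)!·(n−m)!}`, the inner product being
over all subsets `T ⊆ Fin n` of cardinality `m`. -/
theorem det_C_factorization (n : ℕ) (hn : 1 ≤ n) (q : Fin n → Fin n → ℂ)
    (t : Fin n → Fin n → Equiv.Perm (Fin n))
    (ht : ∀ a b : Fin n, a ≤ b → IsTCycle a b (t b a))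
    (k : Fin n) (hk : (k : ℕ) + 1 < n) :
    ((((List.finRange n).filter fun m => decide (k < m)).reverse.map
        fun m => (1 : PermMatrix n) - twistMat n q (t m k)).prod).det =
      ∏ m ∈ Finset.Icc 2 (n - (k : ℕ)),
        ∏ T ∈ Finset.powersetCard m (Finset.univ : Finset (Fin n)),
          (1 - sigmaT q T) ^ (Nat.factorial (m - 1) * Nat.factorial (n - m)) :=
  det_C_factorization_general n q t ht k
end

section
/- For every i ∈ Fin N, every word x = x₁x₂⋯x_m ∈ FreeMonoid (Fin N), and every element y of the free algebra B, the twisted Leibniz rule holds: ∂_i(x·y) = ∂_i(x)·y + (∏_{k=1}^{m} q(i, x_k)) · x·∂_i(y), where x·y denotes the product in B of the basis element corresponding to x with y. -/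
/-!
Unfolding the sum over deleted positions along the first letter gives the recursion
`∂ᵢ(a t) = δ_{a,i} t + q(i, a) a ∂ᵢ(t)`, which makes sense over any commutative semiring and
any alphabet. Induction on the first word along this recursion gives the twisted Leibniz rule
for a product of two words, and both sides are linear in the second factor.
-/

/-- The free unital associative ℂ-algebra `B` on `N` generators, realized as the monoid
algebra of the free monoid on `Fin N`. -/
abbrev FreeAlg (N : ℕ) := MonoidAlgebra ℂ (FreeMonoid (Fin N))

/-- The value of the multiparametric partial derivative `∂_i` on the basis word
`w = w₁w₂⋯w_m`:  `∂_i(w) = ∑_{k : w_k = i} (∏_{l=1}^{k−1} q(i, w_l)) · (w with its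
k-th letter deleted)`. -/
noncomputable def qDerivWord (N : ℕ) (q : Fin N → Fin N → ℂ) (i : Fin N)
    (w : FreeMonoid (Fin N)) : FreeAlg N :=
  ∑ k : Fin (FreeMonoid.toList w).length,
    if (FreeMonoid.toList w).get k = i then
      MonoidAlgebra.single
        (FreeMonoid.ofList
          ((FreeMonoid.toList w).take (k : ℕ) ++ (FreeMonoid.toList w).drop ((k : ℕ) + 1)))
        (((FreeMonoid.toList w).take (k : ℕ)).map (q i)).prod
    else 0

/-- The multiparametric partial derivative `∂_i`, the ℂ-linear endomorphism of `B`
acting on basis words by `qDerivWord`. -/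
noncomputable def qDeriv (N : ℕ) (q : Fin N → Fin N → ℂ) (i : Fin N) :
    FreeAlg N →ₗ[ℂ] FreeAlg N :=
  (Finsupp.lsum ℂ fun w => LinearMap.toSpanSingleton ℂ (FreeAlg N) (qDerivWord N q i w)) ∘ₗ
    (MonoidAlgebra.coeffLinearEquiv ℂ : FreeAlg N ≃ₗ[ℂ] (FreeMonoid (Fin N) →₀ ℂ)).toLinearMap


open MonoidAlgebra

section qDerivList

variable {R α : Type*} [CommSemiring R]

theorem single_ofList_append_one (l₁ l₂ : List α) :
    (single (FreeMonoid.ofList (l₁ ++ l₂)) 1 : MonoidAlgebra R (FreeMonoid α)) =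
      single (FreeMonoid.ofList l₁) 1 * single (FreeMonoid.ofList l₂) 1 := by
  rw [single_mul_single, FreeMonoid.ofList_append, one_mul]

variable [DecidableEq α] (q : α → α → R) (i : α)

noncomputable def qDerivList : List α → MonoidAlgebra R (FreeMonoid α)
  | [] => 0
  | a :: t => (if a = i then single (FreeMonoid.ofList t) 1 else 0) +
      q i a • (single (FreeMonoid.ofList [a]) 1 * qDerivList t)

theorem qDerivList_append (l₁ l₂ : List α) :
    qDerivList q i (l₁ ++ l₂) =
      qDerivList q i l₁ * single (FreeMonoid.ofList l₂) 1 +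
        (l₁.map (q i)).prod • (single (FreeMonoid.ofList l₁) 1 * qDerivList q i l₂) := by
  induction l₁ with
  | nil => simp [qDerivList, ← one_def]
  | cons a t ih =>
    rw [List.cons_append, qDerivList, qDerivList, ih, single_ofList_append_one t l₂,
      show a :: t = [a] ++ t from rfl, single_ofList_append_one [a] t]
    simp only [List.map_append, List.prod_append, List.map_cons, List.map_nil, List.prod_cons,
      List.prod_nil, mul_one, add_mul, mul_add, smul_add, smul_mul_assoc, mul_smul_comm, ite_mul,
      zero_mul, mul_assoc, smul_smul, add_assoc]

end qDerivList

theorem qDerivWord_ofList (N : ℕ) (q : Fin N → Fin N → ℂ) (i : Fin N) (l : List (Fin N)) :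
    qDerivWord N q i (FreeMonoid.ofList l) = qDerivList q i l := by
  have hsum : ∀ l : List (Fin N), qDerivWord N q i (FreeMonoid.ofList l) =
      ∑ k : Fin l.length, if l.get k = i then
        (single (FreeMonoid.ofList (l.take k ++ l.drop (k + 1))) ((l.take k).map (q i)).prod :
          FreeAlg N)
      else 0 := fun _ => rfl
  induction l with
  | nil => rw [hsum]; simp [qDerivList]
  | cons a t ih =>
    rw [qDerivList, ← ih, hsum, hsum]
    refine (Fin.sum_univ_succ (n := t.length) _).trans ?_
    simp only [List.get_eq_getElem, Fin.val_zero, List.getElem_cons_zero, List.take_zero,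
      List.drop_succ_cons, List.drop_zero, List.nil_append, List.map_nil, List.prod_nil,
      Fin.val_succ, List.getElem_cons_succ, List.take_succ_cons, List.cons_append, List.map_cons,
      List.prod_cons, Finset.mul_sum, Finset.smul_sum]
    congr 1
    refine Finset.sum_congr rfl fun k _ => ?_
    split_ifs
    · rw [single_mul_single, ← FreeMonoid.ofList_append, smul_single']
      simp [mul_comm]
    · simp

theorem qDerivWord_eq_qDerivList_toList (N : ℕ) (q : Fin N → Fin N → ℂ) (i : Fin N)
    (w : FreeMonoid (Fin N)) : qDerivWord N q i w = qDerivList q i w.toList := by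
  rw [← qDerivWord_ofList, FreeMonoid.ofList_toList]

theorem qDeriv_single (N : ℕ) (q : Fin N → Fin N → ℂ) (i : Fin N)
    (w : FreeMonoid (Fin N)) (c : ℂ) :
    qDeriv N q i (single w c) = c • qDerivWord N q i w := by
  simp [qDeriv]

theorem qDerivWord_mul (N : ℕ) (q : Fin N → Fin N → ℂ) (i : Fin N)
    (x w : FreeMonoid (Fin N)) :
    qDerivWord N q i (x * w) =
      qDerivWord N q i x * single w 1 +
        (x.toList.map (q i)).prod • (single x 1 * qDerivWord N q i w) := by
  simp only [qDerivWord_eq_qDerivList_toList, FreeMonoid.toList_mul, qDerivList_append,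
    FreeMonoid.ofList_toList]

theorem qDeriv_twisted_leibniz_general (N : ℕ) (q : Fin N → Fin N → ℂ)
    (i : Fin N) (x : FreeMonoid (Fin N)) (y : FreeAlg N) :
    qDeriv N q i (MonoidAlgebra.of ℂ (FreeMonoid (Fin N)) x * y) =
      qDeriv N q i (MonoidAlgebra.of ℂ (FreeMonoid (Fin N)) x) * y +
        ((FreeMonoid.toList x).map (q i)).prod •
          (MonoidAlgebra.of ℂ (FreeMonoid (Fin N)) x * qDeriv N q i y) := by
  induction y using MonoidAlgebra.induction_linear with
  | zero => simp
  | add f g hf hg =>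
    simp only [mul_add, map_add, smul_add, hf, hg]
    abel
  | single w c =>
    have single_eq : (single w c : FreeAlg N) = c • single w 1 := by rw [smul_single', mul_one]
    rw [of_apply, single_mul_single, one_mul, qDeriv_single, qDeriv_single, qDeriv_single,
      qDerivWord_mul, single_eq]
    simp only [one_smul, smul_add, mul_smul_comm, smul_comm c]

/-- The twisted Leibniz rule: for every word `x = x₁⋯x_m` and every `y ∈ B`,
`∂_i(x·y) = ∂_i(x)·y + (∏_{k=1}^{m} q(i, x_k)) · x·∂_i(y)`. -/
theorem qDeriv_twisted_leibniz (N : ℕ) (hN : 1 ≤ N) (q : Fin N → Fin N → ℂ)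
    (i : Fin N) (x : FreeMonoid (Fin N)) (y : FreeAlg N) :
    qDeriv N q i (MonoidAlgebra.of ℂ (FreeMonoid (Fin N)) x * y) =
      qDeriv N q i (MonoidAlgebra.of ℂ (FreeMonoid (Fin N)) x) * y +
        ((FreeMonoid.toList x).map (q i)).prod •
          (MonoidAlgebra.of ℂ (FreeMonoid (Fin N)) x * qDeriv N q i y) :=
  qDeriv_twisted_leibniz_general N q i x y
end
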